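/- arXiv:1803.09521 — 2 statements merged into one kernel-verified Lean document; each statement's English description precedes it below -/
import Mathlib

section
/- Let (𝒜,T) be a crystallographic Tits arrangement with respect to R and let K, L be adjacent chambers. Choose an indexing B^K = {α_1,…,α_r} and let the indexing B^L = {β_1,…,β_r} be compatible with B^K. Assume cl(K) ∩ cl(L) ⊆ ker α_k for some 1 ≤ k ≤ r. Then there exist integers c_i (i = 1,…,r) such that β_i = c_i·α_k + α_i for all i; moreover c_k = −2 and c_i ∈ ℕ₀ for all i ≠ k. -/
open Set

noncomputable section

section Arrangements

variable {V : Type*} [AddCommGroup V] [Module ℝ V] [TopologicalSpace V]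

/-- The kernel of a linear functional, as a subset of `V`. -/
def dualKer (α : Module.Dual ℝ V) : Set V := {v | α v = 0}

/-- A linear hyperplane: the kernel of a nonzero linear functional. -/
def IsLinearHyperplane (H : Set V) : Prop :=
  ∃ α : Module.Dual ℝ V, α ≠ 0 ∧ H = dualKer α

/-- A hyperplane arrangement `(𝒜, T)`: `T` is an open convex cone, `𝒜` a set of linear
hyperplanes, each meeting `T`, which is locally finite in `T`. -/
structure IsHyperplaneArrangement (𝒜 : Set (Set V)) (T : Set V) : Prop where
  T_nonempty : T.Nonempty
  T_open : IsOpen T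
  T_convex : Convex ℝ T
  T_cone : ∀ x ∈ T, ∀ c : ℝ, 0 < c → c • x ∈ T
  hyperplanes : ∀ H ∈ 𝒜, IsLinearHyperplane H
  meets : ∀ H ∈ 𝒜, (H ∩ T).Nonempty
  locallyFinite : ∀ x ∈ T, ∃ U : Set V, IsOpen U ∧ x ∈ U ∧ U ⊆ T ∧
    {H ∈ 𝒜 | (H ∩ U).Nonempty}.Finite

/-- The chambers: connected components of `T \ ⋃ 𝒜`. -/
def chambersOf (𝒜 : Set (Set V)) (T : Set V) : Set (Set V) :=
  {K | ∃ x ∈ T \ ⋃₀ 𝒜, K = connectedComponentIn (T \ ⋃₀ 𝒜) x}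

/-- `H` is a wall of the chamber `K`: a hyperplane missing `K` such that
`H ∩ cl(K)` spans `H`. -/
def IsWall (K H : Set V) : Prop :=
  IsLinearHyperplane H ∧ H ∩ K = ∅ ∧
    (Submodule.span ℝ (H ∩ closure K) : Set V) = H

/-- An open simplicial cone: `⋂_{α ∈ B} α⁻¹(ℝ_{>0})` for a basis `B` of the dual space. -/
def IsOpenSimplicialCone (K : Set V) : Prop :=
  ∃ b : Module.Basis (Fin (Module.finrank ℝ V)) ℝ (Module.Dual ℝ V),
    K = {v | ∀ i, 0 < b i v}

/-- A Tits arrangement: a hyperplane arrangement all of whose chambers are open simplicial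
cones (simplicial) and such that every wall of every chamber belongs to `𝒜` (thin). -/
structure IsTitsArrangement (𝒜 : Set (Set V)) (T : Set V) extends
    IsHyperplaneArrangement 𝒜 T : Prop where
  simplicial : ∀ K ∈ chambersOf 𝒜 T, IsOpenSimplicialCone K
  thin : ∀ K ∈ chambersOf 𝒜 T, ∀ H : Set V, IsWall K H → H ∈ 𝒜

/-- `R` is a root system with associated arrangement `𝒜`: `0 ∉ R`, `R = -R` and
`𝒜 = {ker α | α ∈ R}`. -/
def IsAssociatedRootSystem (𝒜 : Set (Set V)) (R : Set (Module.Dual ℝ V)) : Prop :=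
  (0 : Module.Dual ℝ V) ∉ R ∧ (∀ α ∈ R, -α ∈ R) ∧ 𝒜 = {H | ∃ α ∈ R, H = dualKer α}

/-- The root basis `B^K` of a chamber `K`. -/
def rootBasisOf (R : Set (Module.Dual ℝ V)) (K : Set V) : Set (Module.Dual ℝ V) :=
  {α ∈ R | IsWall K (dualKer α) ∧ ∀ x ∈ K, 0 < α x}

/-- `β` is a non-negative real linear combination of elements of `B`. -/
def InNNRealSpan (B : Set (Module.Dual ℝ V)) (β : Module.Dual ℝ V) : Prop :=
  ∃ (s : Finset (Module.Dual ℝ V)) (c : Module.Dual ℝ V → ℝ),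
    ↑s ⊆ B ∧ (∀ α ∈ s, 0 ≤ c α) ∧ β = ∑ α ∈ s, c α • α

/-- `β` is a non-negative integral linear combination of elements of `B`. -/
def InNatSpan (B : Set (Module.Dual ℝ V)) (β : Module.Dual ℝ V) : Prop :=
  ∃ (s : Finset (Module.Dual ℝ V)) (c : Module.Dual ℝ V → ℕ),
    ↑s ⊆ B ∧ β = ∑ α ∈ s, (c α : ℝ) • α

/-- `β` is an integral linear combination of elements of `B`. -/
def InIntSpan (B : Set (Module.Dual ℝ V)) (β : Module.Dual ℝ V) : Prop :=
  ∃ (s : Finset (Module.Dual ℝ V)) (c : Module.Dual ℝ V → ℤ),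
    ↑s ⊆ B ∧ β = ∑ α ∈ s, (c α : ℝ) • α

/-- The crystallographic property: `R ⊆ ±∑_{α ∈ B^K} ℕ₀ α` for every chamber `K`. -/
def IsCrystallographic (𝒜 : Set (Set V)) (T : Set V) (R : Set (Module.Dual ℝ V)) : Prop :=
  ∀ K ∈ chambersOf 𝒜 T, ∀ β ∈ R,
    InNatSpan (rootBasisOf R K) β ∨ InNatSpan (rootBasisOf R K) (-β)

/-- The chamber complex `𝒮(𝒜,T)`. -/
def chamberComplexOf (𝒜 : Set (Set V)) (T : Set V) : Set (Set V) :=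
  {S | ∃ K ∈ chambersOf 𝒜 T, ∃ W : Set (Set V),
    (∀ H ∈ W, IsWall K H) ∧ S = closure K ∩ ⋂₀ W}

/-- `(𝒜,T)` is `k`-spherical: every simplex of the chamber complex of codimension `k`
meets `T`. -/
def IsKSpherical (𝒜 : Set (Set V)) (T : Set V) (k : ℕ) : Prop :=
  ∀ S ∈ chamberComplexOf 𝒜 T,
    Module.finrank ℝ (Submodule.span ℝ S) = Module.finrank ℝ V - k → (S ∩ T).Nonempty

/-- A reduced root system: `R ∩ ℝα = {±α}` for every `α ∈ R`. -/
def IsReducedRS (R : Set (Module.Dual ℝ V)) : Prop :=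
  ∀ α ∈ R, {β ∈ R | ∃ c : ℝ, β = c • α} = {α, -α}

/-- The hyperplane `H` separates `K` and `K'`. -/
def SeparatesH (H K K' : Set V) : Prop :=
  ∃ α : Module.Dual ℝ V, H = dualKer α ∧ (∀ x ∈ K, 0 < α x) ∧ ∀ x ∈ K', α x < 0

/-- The set `S(K,K')` of hyperplanes of `𝒜` separating `K` and `K'`. -/
def sepSet (𝒜 : Set (Set V)) (K K' : Set V) : Set (Set V) :=
  {H ∈ 𝒜 | SeparatesH H K K'}

/-- The reduction of a set of functionals: the shortest elements on each line. -/
def reducedOf (S : Set (Module.Dual ℝ V)) : Set (Module.Dual ℝ V) :=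
  {β ∈ S | ∀ γ ∈ S, ∀ c : ℝ, γ = c • β → 1 ≤ |c|}

end Arrangements

/-- The standard real vector space `ℝ^r`. -/
abbrev Vr (r : ℕ) : Type := Fin r → ℝ

/-!
The kernels of the forms `b j` cutting out a simplicial chamber are its walls, so by thinness each
`b j` has a positive multiple in the root basis; conversely every root of the root basis is a
positive multiple of some `b j`. Counting then shows that an indexed root basis is, up to positive
scalars, a permutation of `b`, hence linearly independent.

By compatibility `β i = a • α i + c • α k`. At a point of the common facet `cl K ∩ cl L` where
`α i > 0` the form `α k` vanishes and `β i ≥ 0`, so `a > 0`. Crystallographicity with respect to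
`K` makes `a` and `c` natural numbers; with respect to `L`, applied to
`α i = a⁻¹ • β i + (a⁻¹ * c) • β k`, it makes `a⁻¹` a natural number as well, so `a = 1`.
-/

section LinearForms

variable {V : Type*} [AddCommGroup V] [Module ℝ V]

lemma dualKer_eq_ker (f : Module.Dual ℝ V) : dualKer f = (LinearMap.ker f : Set V) := rfl

lemma dualKer_smul {c : ℝ} (hc : c ≠ 0) (f : Module.Dual ℝ V) : dualKer (c • f) = dualKer f := by
  ext x
  simp [dualKer, hc]

lemma exists_smul_eq_of_ker_le {f g : Module.Dual ℝ V} (h : LinearMap.ker f ≤ LinearMap.ker g) :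
    ∃ c : ℝ, c • f = g := by
  have := mem_span_of_iInf_ker_le_ker (L := fun _ : Unit ↦ f) (K := g) (by simpa using h)
  rwa [Set.range_const, Submodule.mem_span_singleton] at this

lemma exists_pos_of_span_eq_dualKer {S : Set V} {φ ψ : Module.Dual ℝ V}
    (hφ : ∀ x ∈ S, 0 ≤ φ x) (hS : (Submodule.span ℝ S : Set V) = dualKer ψ)
    (hφψ : ∀ c : ℝ, c • ψ ≠ φ) : ∃ x ∈ S, 0 < φ x := by
  by_contra! h
  have hker : LinearMap.ker ψ ≤ LinearMap.ker φ := by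
    rw [← SetLike.coe_set_eq.mp (hS.trans (dualKer_eq_ker ψ)), Submodule.span_le]
    exact fun x hx ↦ le_antisymm (h x hx) (hφ x hx)
  obtain ⟨c, hc⟩ := exists_smul_eq_of_ker_le hker
  exact hφψ c hc

end LinearForms

section Closure

variable {V : Type*} [AddCommGroup V] [Module ℝ V] [FiniteDimensional ℝ V] [TopologicalSpace V]
  [IsTopologicalAddGroup V] [ContinuousSMul ℝ V] [T2Space V]

lemma nonneg_of_mem_closure {K : Set V} {γ : Module.Dual ℝ V} (hγ : ∀ x ∈ K, 0 < γ x) {x : V}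
    (hx : x ∈ closure K) : 0 ≤ γ x :=
  closure_minimal (fun y hy ↦ (hγ y hy).le)
    (isClosed_le continuous_const (LinearMap.continuous_of_finiteDimensional γ)) hx

end Closure

section SimplicialCone

variable {V : Type*} [AddCommGroup V] [Module ℝ V] {ι : Type*}

def simplicialCone (b : ι → Module.Dual ℝ V) : Set V := {v | ∀ i, 0 < b i v}

@[simp]
lemma mem_simplicialCone {b : ι → Module.Dual ℝ V} {v : V} :
    v ∈ simplicialCone b ↔ ∀ i, 0 < b i v :=
  Iff.rfl

variable [FiniteDimensional ℝ V] [Fintype ι] [DecidableEq ι]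

def Module.Basis.predual (b : Module.Basis ι ℝ (Module.Dual ℝ V)) : Module.Basis ι ℝ V :=
  b.dualBasis.map (Module.evalEquiv ℝ V).symm

variable (b : Module.Basis ι ℝ (Module.Dual ℝ V))

lemma Module.Basis.predual_repr_apply (x : V) (i : ι) : b.predual.repr x i = b i x := by
  simp [Module.Basis.predual]

lemma Module.Basis.apply_predual_eq_repr (γ : Module.Dual ℝ V) (j : ι) :
    γ (b.predual j) = b.repr γ j := by
  simp [Module.Basis.predual]

lemma Module.Basis.apply_predual (i j : ι) : b i (b.predual j) = if i = j then 1 else 0 := by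
  rw [b.apply_predual_eq_repr, Module.Basis.repr_self, Finsupp.single_apply]

lemma Module.Basis.apply_predual_nonneg (i j : ι) : 0 ≤ b i (b.predual j) := by
  rw [b.apply_predual]
  split_ifs <;> norm_num

lemma sum_predual_mem_simplicialCone : ∑ j, b.predual j ∈ simplicialCone b := by
  intro i
  simp [b.apply_predual]

lemma add_smul_predual_mem_simplicialCone {t : ℝ} (ht : 0 ≤ t) (j : ι) :
    ∑ j, b.predual j + t • b.predual j ∈ simplicialCone b := by
  intro i
  rw [map_add, map_smul, smul_eq_mul]
  nlinarith [sum_predual_mem_simplicialCone b i, b.apply_predual_nonneg i j]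

lemma repr_nonneg_of_pos_on_simplicialCone {γ : Module.Dual ℝ V}
    (hγ : ∀ v ∈ simplicialCone b, 0 < γ v) (j : ι) : 0 ≤ b.repr γ j := by
  by_contra! hj
  have hu := hγ _ (sum_predual_mem_simplicialCone b)
  -- with `u = ∑ j, b.predual j`, the point `u + t • b.predual j` of the cone, for
  -- `t = -γ u / b.repr γ j`, lies in `ker γ`
  have := hγ _ (add_smul_predual_mem_simplicialCone b (t := -γ (∑ j, b.predual j) / b.repr γ j)
    (div_nonneg_of_nonpos (by linarith) hj.le) j)
  rw [map_add, map_smul, b.apply_predual_eq_repr, smul_eq_mul, div_mul_cancel₀ _ hj.ne] at this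
  linarith

variable [TopologicalSpace V] [IsTopologicalAddGroup V] [ContinuousSMul ℝ V] [T2Space V]

lemma closure_simplicialCone : closure (simplicialCone b) = {v | ∀ i, 0 ≤ b i v} := by
  refine Subset.antisymm
    (fun v hv i ↦ nonneg_of_mem_closure (fun x hx ↦ mem_simplicialCone.mp hx i) hv) fun v hv ↦ ?_
  set u := ∑ j, b.predual j
  have hlim : Filter.Tendsto (fun t : ℝ ↦ v + t • u) (nhdsWithin 0 (Ioi 0)) (nhds v) := by
    have := ((continuous_const.add (continuous_id.smul continuous_const)).tendsto 0).mono_left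
      (nhdsWithin_le_nhds (s := Ioi (0 : ℝ))) (f := fun t : ℝ ↦ v + t • u)
    simpa using this
  refine mem_closure_of_tendsto hlim (Filter.eventually_of_mem self_mem_nhdsWithin fun t ht i ↦ ?_)
  have hu := sum_predual_mem_simplicialCone b i
  simp only [map_add, map_smul, smul_eq_mul]
  nlinarith [hv i, mem_Ioi.mp ht]

lemma predual_mem_closure_simplicialCone (j : ι) : b.predual j ∈ closure (simplicialCone b) := by
  rw [closure_simplicialCone]
  exact fun i ↦ b.apply_predual_nonneg i j

lemma isWall_simplicialCone (j : ι) : IsWall (simplicialCone b) (dualKer (b j)) := by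
  refine ⟨⟨b j, b.ne_zero j, rfl⟩, ?_, Subset.antisymm ?_ fun x hx ↦ ?_⟩
  · exact eq_empty_of_forall_notMem fun x ⟨hx, hxK⟩ ↦ (hxK j).ne' hx
  · exact (Submodule.span_le (p := LinearMap.ker (b j))).mpr inter_subset_left
  · rw [← b.predual.sum_repr x]
    refine Submodule.sum_mem _ fun t _ ↦ ?_
    rw [b.predual_repr_apply]
    by_cases htj : t = j
    · rw [htj, show b j x = 0 from hx, zero_smul]
      exact Submodule.zero_mem _
    · have hbt : b j (b.predual t) = 0 := by rw [b.apply_predual, if_neg (Ne.symm htj)]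
      exact Submodule.smul_mem _ _
        (Submodule.subset_span ⟨hbt, predual_mem_closure_simplicialCone b t⟩)

lemma exists_eq_smul_of_isWall_simplicialCone {γ : Module.Dual ℝ V}
    (hγ : ∀ v ∈ simplicialCone b, 0 < γ v) (hwall : IsWall (simplicialCone b) (dualKer γ)) :
    ∃ j, ∃ c : ℝ, 0 < c ∧ γ = c • b j := by
  have hnn := repr_nonneg_of_pos_on_simplicialCone b hγ
  have hγ0 : γ ≠ 0 := by
    rintro rfl
    simpa using hγ _ (sum_predual_mem_simplicialCone b)
  obtain ⟨j, hj⟩ : ∃ j, 0 < b.repr γ j := by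
    by_contra! h
    exact hγ0 (b.repr.map_eq_zero_iff.mp (Finsupp.ext fun j ↦ le_antisymm (h j) (hnn j)))
  -- on the face `ker γ ∩ cl K` the form `γ = ∑ cᵢ bᵢ` is a vanishing sum of nonnegative terms
  have hface : dualKer γ ∩ closure (simplicialCone b) ⊆ dualKer (b j) := by
    rintro x ⟨hx, hxK⟩
    rw [closure_simplicialCone] at hxK
    have hsum : ∑ i, b.repr γ i * b i x = γ x := by
      conv_rhs => rw [← b.sum_repr γ]
      simp only [LinearMap.coe_sum, Finset.sum_apply, LinearMap.smul_apply, smul_eq_mul]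
    rw [show γ x = 0 from hx] at hsum
    have := (Finset.sum_eq_zero_iff_of_nonneg fun i _ ↦ mul_nonneg (hnn i) (hxK i)).mp hsum j
      (Finset.mem_univ j)
    exact (mul_eq_zero.mp this).resolve_left hj.ne'
  obtain ⟨c, hc⟩ : ∃ c : ℝ, c • γ = b j := by
    have hspan := SetLike.coe_subset_coe.mpr
      ((Submodule.span_le (p := LinearMap.ker (b j))).mpr hface)
    rw [hwall.2.2] at hspan
    exact exists_smul_eq_of_ker_le hspan
  have hc0 : c ≠ 0 := by
    rintro rfl
    exact b.ne_zero j (by rw [← hc, zero_smul])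
  have hγc : γ = c⁻¹ • b j := by rw [← hc, smul_smul, inv_mul_cancel₀ hc0, one_smul]
  refine ⟨j, c⁻¹, ?_, hγc⟩
  simpa [hγc] using hj

end SimplicialCone

section RootBasis

variable {V : Type*} [AddCommGroup V] [Module ℝ V] [FiniteDimensional ℝ V] [TopologicalSpace V]
  [IsTopologicalAddGroup V] [ContinuousSMul ℝ V] [T2Space V]
  {𝒜 : Set (Set V)} {T : Set V} {R : Set (Module.Dual ℝ V)}

lemma smul_mem_rootBasisOf_simplicialCone {ι : Type*} [Fintype ι] [DecidableEq ι]
    {b : Module.Basis ι ℝ (Module.Dual ℝ V)} {j : ι} {c : ℝ} (hc : 0 < c) (hcR : c • b j ∈ R) :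
    c • b j ∈ rootBasisOf R (simplicialCone b) := by
  refine ⟨hcR, ?_, fun v hv ↦ ?_⟩
  · rw [dualKer_smul hc.ne']
    exact isWall_simplicialCone b j
  · simpa using mul_pos hc (hv j)

lemma exists_smul_mem_rootBasisOf (hTits : IsTitsArrangement 𝒜 T)
    (hR : IsAssociatedRootSystem 𝒜 R) {ι : Type*} [Fintype ι] [DecidableEq ι]
    {b : Module.Basis ι ℝ (Module.Dual ℝ V)} (hK : simplicialCone b ∈ chambersOf 𝒜 T) (j : ι) :
    ∃ c : ℝ, 0 < c ∧ c • b j ∈ rootBasisOf R (simplicialCone b) := by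
  obtain ⟨ρ, hρR, hρ⟩ : ∃ ρ ∈ R, dualKer (b j) = dualKer ρ := by
    have h := hTits.thin _ hK _ (isWall_simplicialCone b j)
    rwa [hR.2.2] at h
  obtain ⟨c, hc⟩ := exists_smul_eq_of_ker_le (f := ρ) (g := b j)
    (by rw [← SetLike.coe_subset_coe, ← dualKer_eq_ker, ← dualKer_eq_ker, hρ])
  have hc0 : c ≠ 0 := by
    rintro rfl
    exact b.ne_zero j (by rw [← hc, zero_smul])
  have hρc : ρ = c⁻¹ • b j := by rw [← hc, smul_smul, inv_mul_cancel₀ hc0, one_smul]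
  rcases hc0.lt_or_gt with hneg | hpos
  · refine ⟨-c⁻¹, by simpa using hneg, smul_mem_rootBasisOf_simplicialCone (by simpa using hneg) ?_⟩
    rw [neg_smul (M := Module.Dual ℝ V), ← hρc]
    exact hR.2.1 ρ hρR
  · exact ⟨c⁻¹, inv_pos.mpr hpos,
      smul_mem_rootBasisOf_simplicialCone (inv_pos.mpr hpos) (hρc ▸ hρR)⟩

lemma rootBasisOf_linearIndependent (hTits : IsTitsArrangement 𝒜 T)
    (hR : IsAssociatedRootSystem 𝒜 R) {K : Set V} (hK : K ∈ chambersOf 𝒜 T)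
    {ι : Type*} [Fintype ι] {f : ι → Module.Dual ℝ V} (hcard : Fintype.card ι = Module.finrank ℝ V)
    (hran : range f = rootBasisOf R K) :
    LinearIndependent ℝ f := by
  obtain ⟨b, rfl⟩ := hTits.simplicial K hK
  have hmem (i : ι) : f i ∈ rootBasisOf R (simplicialCone b) := hran ▸ mem_range_self i
  choose g μ hμ hf using fun i ↦
    exists_eq_smul_of_isWall_simplicialCone b (hmem i).2.2 (hmem i).2.1
  have hg : Function.Bijective g := by
    refine (Fintype.bijective_iff_surjective_and_card g).mpr ⟨fun j ↦ ?_, by simpa using hcard⟩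
    obtain ⟨c, hc, hcK⟩ := exists_smul_mem_rootBasisOf hTits hR hK j
    obtain ⟨i, hi⟩ := hran ▸ hcK
    exact ⟨i, b.linearIndependent.eq_of_smul_apply_eq_smul_apply _ _ _ _ (hμ i).ne'
      ((hf i).symm.trans hi)⟩
  have : f = fun i ↦ (Units.mk0 (μ i) (hμ i).ne') • (b ∘ g) i := funext fun i ↦ hf i
  rw [this]
  exact (b.linearIndependent.comp g hg.injective).units_smul _

end RootBasis

section NatSpan

variable {V : Type*} [AddCommGroup V] [Module ℝ V]
  {ι : Type*} [Fintype ι] {f : ι → Module.Dual ℝ V}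

lemma InNatSpan.exists_eq_sum (hf : Function.Injective f) {γ : Module.Dual ℝ V}
    (h : InNatSpan (range f) γ) : ∃ m : ι → ℕ, γ = ∑ j, (m j : ℝ) • f j := by
  classical
  obtain ⟨s, c, hs, rfl⟩ := h
  refine ⟨fun j ↦ if j ∈ s.preimage f hf.injOn then c (f j) else 0, ?_⟩
  simp only [Nat.cast_ite, Nat.cast_zero, ite_smul, zero_smul]
  rw [Finset.sum_ite_mem, Finset.univ_inter]
  exact (Finset.sum_preimage f s hf.injOn (fun x ↦ (c x : ℝ) • x)
    fun x hx hxf ↦ absurd (hs hx) hxf).symm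

lemma LinearIndependent.exists_natCast_of_inNatSpan_pair (hf : LinearIndependent ℝ f) {i k : ι}
    (hik : i ≠ k) {a b : ℝ} (h : InNatSpan (range f) (a • f i + b • f k)) :
    ∃ m n : ℕ, a = m ∧ b = n := by
  classical
  obtain ⟨m, hm⟩ := h.exists_eq_sum hf.injective
  have hpair : a • f i + b • f k = ∑ j, (Pi.single i a + Pi.single k b : ι → ℝ) j • f j := by
    simp [Pi.single_apply, add_smul, Finset.sum_add_distrib, ite_smul]
  have hcoeff := Fintype.linearIndependent_iffₛ.mp hf _ _ (hm.symm.trans hpair)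
  exact ⟨m i, m k, by simpa [hik] using (hcoeff i).symm, by simpa [hik.symm] using (hcoeff k).symm⟩

lemma LinearIndependent.exists_natCast_of_inNatSpan_or_neg_pair (hf : LinearIndependent ℝ f)
    {i k : ι} (hik : i ≠ k) {a b : ℝ} (ha : 0 < a)
    (h : InNatSpan (range f) (a • f i + b • f k) ∨ InNatSpan (range f) (-(a • f i + b • f k))) :
    ∃ m n : ℕ, a = m ∧ b = n := by
  rcases h with h | h
  · exact hf.exists_natCast_of_inNatSpan_pair hik h
  · rw [neg_add, ← neg_smul (M := Module.Dual ℝ V), ← neg_smul (M := Module.Dual ℝ V)] at h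
    obtain ⟨m, -, hm, -⟩ := hf.exists_natCast_of_inNatSpan_pair hik h
    linarith [(Nat.cast_nonneg m : (0 : ℝ) ≤ m)]

lemma exists_eq_nsmul_add_of_inNatSpan {α β : ι → Module.Dual ℝ V} (hα : LinearIndependent ℝ α)
    (hβ : LinearIndependent ℝ β) {i k : ι} (hik : i ≠ k) (hβk : β k = -α k) {a b : ℝ}
    (ha : 0 < a) (hβi : β i = a • α i + b • α k)
    (hK : InNatSpan (range α) (β i) ∨ InNatSpan (range α) (-β i))
    (hL : InNatSpan (range β) (α i) ∨ InNatSpan (range β) (-α i)) :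
    ∃ n : ℕ, β i = n • α k + α i := by
  obtain ⟨m, n, rfl, rfl⟩ := hα.exists_natCast_of_inNatSpan_or_neg_pair hik ha (hβi ▸ hK)
  have hαi : α i = (m : ℝ)⁻¹ • β i + ((m : ℝ)⁻¹ * n) • β k := by
    rw [hβi, hβk, smul_add, smul_smul, inv_mul_cancel₀ ha.ne', one_smul, smul_smul, smul_neg,
      add_neg_cancel_right]
  obtain ⟨m', -, hm', -⟩ := hβ.exists_natCast_of_inNatSpan_or_neg_pair hik (inv_pos.mpr ha)
    (hαi ▸ hL)
  have hm : m = 1 := Nat.eq_one_of_mul_eq_one_right (by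
    exact_mod_cast (show (m : ℝ) * m' = 1 by rw [← hm', mul_inv_cancel₀ ha.ne']))
  refine ⟨n, ?_⟩
  rw [hβi, hm, Nat.cast_one, one_smul, add_comm, Nat.cast_smul_eq_nsmul]

end NatSpan

section AdjacentChambers

variable {V : Type*} [AddCommGroup V] [Module ℝ V] [FiniteDimensional ℝ V] [TopologicalSpace V]
  [IsTopologicalAddGroup V] [ContinuousSMul ℝ V] [T2Space V]

lemma exists_pos_smul_add_of_adjacent {K L : Set V} {ι : Type*} {α β : ι → Module.Dual ℝ V}
    (hα : LinearIndependent ℝ α) (hβ : LinearIndependent ℝ β)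
    (hαK : ∀ j, ∀ x ∈ K, 0 < α j x) (hβL : ∀ j, ∀ x ∈ L, 0 < β j x) {k : ι}
    (hadj : (Submodule.span ℝ (closure K ∩ closure L) : Set V) = dualKer (α k))
    (hβk : β k = -α k) {i : ι} (hik : i ≠ k) (hβi : β i ∈ Submodule.span ℝ {α i, α k}) :
    ∃ a b : ℝ, 0 < a ∧ β i = a • α i + b • α k := by
  obtain ⟨a, b, hab⟩ := Submodule.mem_span_pair.mp hβi
  obtain ⟨x, hx, hαx⟩ := exists_pos_of_span_eq_dualKer
    (fun x hx ↦ nonneg_of_mem_closure (hαK i) hx.1) hadj fun c hc ↦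
      hik (hα.eq_of_smul_apply_eq_smul_apply 1 c i k one_ne_zero (by rw [one_smul, hc]))
  have hαkx : α k x = 0 := show x ∈ dualKer (α k) from hadj ▸ Submodule.subset_span hx
  have ha : 0 ≤ a * α i x := by
    simpa [← hab, hαkx] using nonneg_of_mem_closure (hβL i) hx.2
  refine ⟨a, b, (nonneg_of_mul_nonneg_left ha hαx).lt_of_ne' fun ha0 ↦ hik ?_, hab.symm⟩
  refine hβ.eq_of_smul_apply_eq_smul_apply 1 (-b) i k one_ne_zero ?_
  rw [one_smul, ← hab, ha0, zero_smul, zero_add, hβk, smul_neg, neg_smul, neg_neg]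

end AdjacentChambers

theorem statement_1_general {r : ℕ} (𝒜 : Set (Set (Vr r))) (T : Set (Vr r))
    (R : Set (Module.Dual ℝ (Vr r)))
    (hTits : IsTitsArrangement 𝒜 T) (hR : IsAssociatedRootSystem 𝒜 R)
    (hcrys : IsCrystallographic 𝒜 T R)
    (K L : Set (Vr r)) (hK : K ∈ chambersOf 𝒜 T) (hL : L ∈ chambersOf 𝒜 T)
    (α β : Fin r → Module.Dual ℝ (Vr r))
    (hαran : Set.range α = rootBasisOf R K)
    (hβran : Set.range β = rootBasisOf R L)
    (k : Fin r)
    (hadj : (Submodule.span ℝ (closure K ∩ closure L) : Set (Vr r)) = dualKer (α k))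
    (hcompat₁ : β k = -α k)
    (hcompat₂ : ∀ i, β i ∈ Submodule.span ℝ {α i, α k}) :
    ∃ c : Fin r → ℤ, (∀ i, β i = c i • α k + α i) ∧ c k = -2 ∧ ∀ i, i ≠ k → 0 ≤ c i := by
  have hcard : Fintype.card (Fin r) = Module.finrank ℝ (Vr r) := by simp
  have hα := rootBasisOf_linearIndependent hTits hR hK hcard hαran
  have hβ := rootBasisOf_linearIndependent hTits hR hL hcard hβran
  have hαK (j : Fin r) : α j ∈ rootBasisOf R K := hαran ▸ mem_range_self j
  have hβL (j : Fin r) : β j ∈ rootBasisOf R L := hβran ▸ mem_range_self j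
  have hc (i : Fin r) : ∃ c : ℤ, β i = c • α k + α i ∧ (i = k → c = -2) ∧ (i ≠ k → 0 ≤ c) := by
    by_cases hik : i = k
    · subst hik
      exact ⟨-2, by rw [hcompat₁]; abel, fun _ ↦ rfl, absurd rfl⟩
    obtain ⟨a, b, ha, hab⟩ := exists_pos_smul_add_of_adjacent hα hβ (fun j ↦ (hαK j).2.2)
      (fun j ↦ (hβL j).2.2) hadj hcompat₁ hik (hcompat₂ i)
    obtain ⟨n, hn⟩ := exists_eq_nsmul_add_of_inNatSpan hα hβ hik hcompat₁ ha hab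
      (hαran ▸ hcrys K hK _ (hβL i).1) (hβran ▸ hcrys L hL _ (hαK i).1)
    exact ⟨n, by rw [hn, natCast_zsmul], fun h ↦ absurd h hik, fun _ ↦ Int.natCast_nonneg n⟩
  choose c hc using hc
  exact ⟨c, fun i ↦ (hc i).1, (hc k).2.1 rfl, fun i ↦ (hc i).2.2⟩

/-- Proposition on adjacent chambers: let `(𝒜,T)` be a crystallographic
Tits arrangement with respect to `R`, let `K, L` be adjacent chambers with indexings
`B^K = {α_1,…,α_r}` and `B^L = {β_1,…,β_r}`, the latter compatible with the former
(so `β_k = -α_k` and `β_i ∈ ⟨α_i, α_k⟩` for all `i`), and assume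
`cl(K) ∩ cl(L) ⊆ ker α_k`.  Then there are integers `c_i` with `β_i = c_i α_k + α_i`
for all `i`, `c_k = -2`, and `c_i ∈ ℕ₀` for `i ≠ k`. -/
theorem statement_1 {r : ℕ} (𝒜 : Set (Set (Vr r))) (T : Set (Vr r))
    (R : Set (Module.Dual ℝ (Vr r)))
    (hTits : IsTitsArrangement 𝒜 T) (hR : IsAssociatedRootSystem 𝒜 R)
    (hcrys : IsCrystallographic 𝒜 T R)
    (K L : Set (Vr r)) (hK : K ∈ chambersOf 𝒜 T) (hL : L ∈ chambersOf 𝒜 T) (hKL : K ≠ L)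
    (α β : Fin r → Module.Dual ℝ (Vr r))
    (hαinj : Function.Injective α) (hαran : Set.range α = rootBasisOf R K)
    (hβinj : Function.Injective β) (hβran : Set.range β = rootBasisOf R L)
    (k : Fin r)
    (hadj : (Submodule.span ℝ (closure K ∩ closure L) : Set (Vr r)) = dualKer (α k))
    (hcompat₁ : β k = -α k)
    (hcompat₂ : ∀ i, β i ∈ Submodule.span ℝ {α i, α k}) :
    ∃ c : Fin r → ℤ, (∀ i, β i = c i • α k + α i) ∧ c k = -2 ∧ ∀ i, i ≠ k → 0 ≤ c i :=
  statement_1_general 𝒜 T R hTits hR hcrys K L hK hL α β hαran hβran k hadj hcompat₁ hcompat₂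
end
end

section
/- Let (𝒜,T) be a crystallographic Tits arrangement with respect to R, with all root bases B^K indexed compatibly. Set I = {1,…,r}, A = 𝒦 (the set of chambers), let C^K be the Cartan matrix at K, and for i ∈ I let ρ_i: A → A send each chamber K to the unique chamber i-adjacent to K. Then 𝒞(I, A, (ρ_i)_{i∈I}, (C^K)_{K∈𝒦}) is a connected Cartan graph. -/
open Set

noncomputable section

section CartanGraphs

/-- A generalized Cartan matrix. -/
def IsGCM {I : Type*} (C : Matrix I I ℤ) : Prop :=
  (∀ i, C i i = 2) ∧ (∀ i j, i ≠ j → C i j ≤ 0) ∧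
    ∀ i j, i ≠ j → C i j = 0 → C j i = 0

variable {I A : Type*} [Fintype I] [DecidableEq I]

/-- The reflection `σ_i` attached to a generalized Cartan matrix, acting on `ℤ^I`;
on the standard basis it is `σ_i(α_j) = α_j - c_{ij} α_i`. -/
def gcmSigma (C : Matrix I I ℤ) (i : I) : (I → ℤ) → (I → ℤ) :=
  fun v k => v k - if k = i then ∑ j, C i j * v j else 0

/-- `WeylHom ρ C a b f` : `f` is a morphism from `a` to `b` of the Weyl groupoid of the
Cartan graph `(I, A, ρ, C)`, i.e. a composite of maps `σ_i^c ∈ Hom(c, ρ_i(c))`. -/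
inductive WeylHom (ρ : I → A → A) (C : A → Matrix I I ℤ) :
    A → A → ((I → ℤ) → (I → ℤ)) → Prop
  | id (a : A) : WeylHom ρ C a a _root_.id
  | comp {a b : A} {f : (I → ℤ) → (I → ℤ)} (i : I) :
      WeylHom ρ C a b f → WeylHom ρ C a (ρ i b) (gcmSigma (C b) i ∘ f)

/-- The axioms of a Cartan graph: `A` nonempty, all `C^a` generalized Cartan matrices,
(C1) each `ρ_i` an involution, (C2) `c^a_{ij} = c^{ρ_i(a)}_{ij}`. -/
def IsCartanGraph (ρ : I → A → A) (C : A → Matrix I I ℤ) : Prop :=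
  Nonempty A ∧ (∀ a, IsGCM (C a)) ∧ (∀ i, Function.Involutive (ρ i)) ∧
    ∀ a i j, C a i j = C (ρ i a) i j

/-- Connectedness: all Hom-sets of the Weyl groupoid are nonempty. -/
def CGConnected (ρ : I → A → A) (C : A → Matrix I I ℤ) : Prop :=
  ∀ a b : A, ∃ f, WeylHom ρ C a b f

/-- Simple connectedness: `Hom(a,a) = {id}` for every object `a`. -/
def CGSimplyConnected (ρ : I → A → A) (C : A → Matrix I I ℤ) : Prop :=
  ∀ (a : A) (f : (I → ℤ) → (I → ℤ)), WeylHom ρ C a a f → f = _root_.id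

/-- The set of real roots at `a`: all images of standard basis vectors under morphisms
into `a`. -/
def realRootsAt (ρ : I → A → A) (C : A → Matrix I I ℤ) (a : A) : Set (I → ℤ) :=
  {v | ∃ (b : A) (f : (I → ℤ) → (I → ℤ)) (j : I), WeylHom ρ C b a f ∧ v = f (Pi.single j 1)}

/-- A root system of type `𝒞 = (I, A, ρ, C)`: axioms (R1)-(R4). -/
def IsRootSystemOfType (ρ : I → A → A) (C : A → Matrix I I ℤ)
    (R : A → Set (I → ℤ)) : Prop :=
  (∀ a, R a = {v ∈ R a | ∀ i, 0 ≤ v i} ∪ (fun v => -v) '' {v ∈ R a | ∀ i, 0 ≤ v i}) ∧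
  (∀ (a : A) (i : I), {v ∈ R a | ∃ n : ℤ, v = n • Pi.single i 1} =
      {Pi.single i 1, -Pi.single i 1}) ∧
  (∀ (a : A) (i : I), gcmSigma (C a) i '' R a = R (ρ i a)) ∧
  ∀ (a : A) (i j : I), i ≠ j →
    {v ∈ R a | ∃ m n : ℕ, v = (m : ℤ) • Pi.single i 1 + (n : ℤ) • Pi.single j 1}.Finite →
    (ρ i ∘ ρ j)^[{v ∈ R a |
        ∃ m n : ℕ, v = (m : ℤ) • Pi.single i 1 + (n : ℤ) • Pi.single j 1}.ncard] a = a

end CartanGraphs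

/-!
Each chamber `K` is the positive cone of its root basis, and this root basis is a basis of the dual
space: it consists of positive multiples of the functionals cutting out `K` as a simplicial cone,
one for each wall. By the crystallographic property every root has coordinates of a single sign
in each root basis. The roots `ind (ρ i K) j = α_j - c_ij α_i` written in the root bases of `K`,
`ρ i K` and `ρ i (ρ i K)` then have a coordinate of known sign, and sign-coherence forces the
generalized Cartan matrix axioms, `ρ i (ρ i K) = K` and `C^K_{ij} = C^{ρ i K}_{ij}`.

For connectedness, a root that is positive on `K` and not a multiple of `α_k` keeps a positive
coordinate other than the `k`-th one after crossing the wall `ker α_k`, hence stays positive.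
So crossing a wall separating `K` from `K'` removes exactly that hyperplane from the separating
set, which is finite by local finiteness along a segment; and if no wall of `K` separates `K`
from `K'`, a point of `K'` lies in `K`.
-/

open Module

section Functionals

variable {V : Type*} [AddCommGroup V] [Module ℝ V]

@[simp]
lemma dualKer_neg (α : Dual ℝ V) : dualKer (-α) = dualKer α := by
  ext v; simp [dualKer]

lemma dualKer_smul_s3 {α : Dual ℝ V} {t : ℝ} (ht : t ≠ 0) : dualKer (t • α) = dualKer α := by
  ext v; simp [dualKer, ht]

lemma exists_smul_eq_of_dualKer_subset {α β : Dual ℝ V} (h : dualKer α ⊆ dualKer β) :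
    ∃ t : ℝ, t • α = β := by
  have hβ := mem_span_of_iInf_ker_le_ker (ι := Unit) (L := fun _ => α) (K := β)
    (by rw [iInf_const]; exact h)
  rwa [Set.range_const, Submodule.mem_span_singleton] at hβ

lemma separatesH_dualKer_iff {β : Dual ℝ V} {P Q : Set V} (hP : P.Nonempty)
    (hβ : ∀ x ∈ P, 0 < β x) : SeparatesH (dualKer β) P Q ↔ ∀ x ∈ Q, β x < 0 := by
  refine ⟨fun ⟨α, hker, hαP, hαQ⟩ x hx => ?_, fun h => ⟨β, rfl, hβ, h⟩⟩
  obtain ⟨t, rfl⟩ := exists_smul_eq_of_dualKer_subset hker.le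
  obtain ⟨p, hp⟩ := hP
  have htp : 0 < t * β p := hαP p hp
  have htx : t * β x < 0 := hαQ x hx
  exact neg_of_mul_neg_right htx ((pos_iff_pos_of_mul_pos htp).2 (hβ p hp)).le

variable {ι : Type*} [Fintype ι]

lemma apply_eq_sum_repr_mul (b : Basis ι ℝ (Dual ℝ V)) (α : Dual ℝ V) (v : V) :
    α v = ∑ i, b.repr α i * b i v := by
  conv_lhs => rw [← b.sum_repr α]
  simp only [LinearMap.coe_sum, Finset.sum_apply, LinearMap.smul_apply, smul_eq_mul]

lemma pos_of_repr_nonneg (b : Basis ι ℝ (Dual ℝ V)) {β : Dual ℝ V} (hβ : β ≠ 0)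
    (hnn : ∀ i, 0 ≤ b.repr β i) {v : V} (hv : ∀ i, 0 < b i v) : 0 < β v := by
  obtain ⟨j, hj⟩ : ∃ j, b.repr β j ≠ 0 := by
    by_contra! h
    exact hβ (b.repr.injective (by ext; simp [h]))
  rw [apply_eq_sum_repr_mul b β v]
  exact Finset.sum_pos' (fun i _ => mul_nonneg (hnn i) (hv i).le)
    ⟨j, Finset.mem_univ _, mul_pos ((hnn j).lt_of_ne' hj) (hv j)⟩

end Functionals

section SignCoherence

variable {W ι : Type*} [AddCommGroup W] [Module ℝ W]

def IsSignCoherent (b : Basis ι ℝ W) (R : Set W) : Prop :=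
  ∀ β ∈ R, (∀ i, 0 ≤ b.repr β i) ∨ (∀ i, b.repr β i ≤ 0)

variable {b : Basis ι ℝ W} {R : Set W}

lemma IsSignCoherent.repr_nonneg (hb : IsSignCoherent b R) {β : W} (hβ : β ∈ R) {j : ι}
    (hj : 0 < b.repr β j) (i : ι) : 0 ≤ b.repr β i :=
  (hb β hβ).resolve_right (fun h => (h j).not_gt hj) i

lemma IsSignCoherent.nonneg_of_add_smul_mem [DecidableEq ι] (hb : IsSignCoherent b R) {i j : ι}
    (hij : i ≠ j) {t : ℝ} (h : b j + t • b i ∈ R) : 0 ≤ t := by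
  simpa [Finsupp.single_apply, hij] using hb.repr_nonneg h (j := j) (by simp [hij]) i

end SignCoherence

section SignCoherentDual

variable {V ι : Type*} [AddCommGroup V] [Module ℝ V] {b : Basis ι ℝ (Dual ℝ V)}
  {R : Set (Dual ℝ V)}

lemma InNatSpan.repr_nonneg {β : Dual ℝ V} (h : InNatSpan (Set.range b) β) (i : ι) :
    0 ≤ b.repr β i := by
  classical
  obtain ⟨s, c, hs, rfl⟩ := h
  rw [map_sum, Finsupp.finsetSum_apply]
  refine Finset.sum_nonneg fun α hα => ?_
  obtain ⟨k, rfl⟩ := hs hα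
  simp only [map_smul, Basis.repr_self, Finsupp.smul_apply, Finsupp.single_apply, smul_eq_mul]
  split_ifs <;> positivity

lemma IsCrystallographic.isSignCoherent [TopologicalSpace V] {𝒜 : Set (Set V)} {T : Set V}
    (hcrys : IsCrystallographic 𝒜 T R) {K : Set V} (hK : K ∈ chambersOf 𝒜 T)
    (hb : Set.range b = rootBasisOf R K) : IsSignCoherent b R := fun β hβ => by
  rcases hcrys K hK β hβ with h | h
  · exact Or.inl (hb ▸ h).repr_nonneg
  · refine Or.inr fun i => ?_
    have := InNatSpan.repr_nonneg (hb ▸ h) i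
    rwa [map_neg, Finsupp.neg_apply, neg_nonneg] at this

variable [Fintype ι]

lemma IsSignCoherent.repr_nonneg_of_pos (hb : IsSignCoherent b R) {β : Dual ℝ V} (hβ : β ∈ R)
    {v : V} (hv : ∀ i, 0 < b i v) (hβv : 0 < β v) (i : ι) : 0 ≤ b.repr β i := by
  refine (hb β hβ).resolve_right (fun h => hβv.not_ge ?_) i
  rw [apply_eq_sum_repr_mul b β v]
  exact Finset.sum_nonpos fun i _ => mul_nonpos_of_nonpos_of_nonneg (h i) (hv i).le

lemma IsSignCoherent.pos_or_neg (hb : IsSignCoherent b R) {β : Dual ℝ V} (hβ : β ∈ R)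
    (hβ0 : β ≠ 0) :
    (∀ v, (∀ i, 0 < b i v) → 0 < β v) ∨ ∀ v, (∀ i, 0 < b i v) → β v < 0 := by
  rcases hb β hβ with h | h
  · exact Or.inl fun v hv => pos_of_repr_nonneg b hβ0 h hv
  · refine Or.inr fun v hv => neg_pos.1 ?_
    exact pos_of_repr_nonneg b (neg_ne_zero.2 hβ0) (fun i => by simpa using h i) hv

end SignCoherentDual

section BasisFamily

variable {W ι A : Type*} [AddCommGroup W] [Module ℝ W]

/-- Models the root bases `B^K` of the chambers `K`, with `ρ i` the `i`-adjacency of chambers and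
`C K` the Cartan matrix at `K`. -/
structure IsReflectionBasisFamily (R : Set W) (b : A → Basis ι ℝ W) (ρ : ι → A → A)
    (C : A → Matrix ι ι ℤ) : Prop where
  neg_mem : ∀ β ∈ R, -β ∈ R
  basis_mem : ∀ a i, b a i ∈ R
  signCoherent : ∀ a, IsSignCoherent (b a) R
  reflect_self : ∀ a i, b (ρ i a) i = -b a i
  reflect : ∀ a i j, b (ρ i a) j = b a j - C a i j • b a i

namespace IsReflectionBasisFamily

variable {R : Set W} {b : A → Basis ι ℝ W} {ρ : ι → A → A} {C : A → Matrix ι ι ℤ}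

lemma cartan_diag (h : IsReflectionBasisFamily R b ρ C) (a : A) (i : ι) : C a i i = 2 := by
  have h2 : ((2 - C a i i : ℤ) : ℝ) • b a i = 0 := by
    have := (h.reflect a i i).symm.trans (h.reflect_self a i)
    rw [Int.cast_smul_eq_zsmul, sub_smul]
    linear_combination (norm := module) this
  have h0 : 2 - C a i i = 0 := by exact_mod_cast (smul_eq_zero.1 h2).resolve_right ((b a).ne_zero i)
  omega

lemma reflect_eq_add_smul (h : IsReflectionBasisFamily R b ρ C) (a : A) (i j : ι) :
    b (ρ i a) j = b a j + (-(C a i j : ℝ)) • b a i := by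
  rw [h.reflect, neg_smul, ← sub_eq_add_neg, Int.cast_smul_eq_zsmul]

variable [DecidableEq ι]

lemma cartan_nonpos (h : IsReflectionBasisFamily R b ρ C) (a : A) {i j : ι} (hij : i ≠ j) :
    C a i j ≤ 0 := by
  have := (h.signCoherent a).nonneg_of_add_smul_mem hij
    (h.reflect_eq_add_smul a i j ▸ h.basis_mem (ρ i a) j)
  exact_mod_cast neg_nonneg.1 this

lemma cartan_eq_zero_symm (h : IsReflectionBasisFamily R b ρ C) (a : A) {i j : ι} (hij : i ≠ j)
    (h0 : C a i j = 0) : C a j i = 0 := by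
  have hLi : b a i = -b (ρ i a) i := by rw [h.reflect_self, neg_neg]
  have hLj : b a j = b (ρ i a) j := by rw [h.reflect, h0, zero_smul, sub_zero]
  have hmem : b (ρ i a) i + (C a j i : ℝ) • b (ρ i a) j ∈ R := by
    have := h.neg_mem _ (h.basis_mem (ρ j a) i)
    rwa [h.reflect_eq_add_smul, hLi, hLj, neg_add, neg_neg, ← neg_smul, neg_neg] at this
  have := (h.signCoherent (ρ i a)).nonneg_of_add_smul_mem hij.symm hmem
  exact le_antisymm (h.cartan_nonpos a hij.symm) (by exact_mod_cast this)

lemma isGCM (h : IsReflectionBasisFamily R b ρ C) (a : A) : IsGCM (C a) :=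
  ⟨h.cartan_diag a, fun _ _ hij => h.cartan_nonpos a hij,
    fun _ _ hij h0 => h.cartan_eq_zero_symm a hij h0⟩

/-- The two rows differ by some `d`, which is `≥ 0` by sign-coherence at `a` and `≤ 0` by
sign-coherence at `ρ i (ρ i a)`. -/
lemma reflect_reflect (h : IsReflectionBasisFamily R b ρ C) (a : A) (i j : ι) :
    C (ρ i a) i j = C a i j ∧ b (ρ i (ρ i a)) j = b a j := by
  have hMi : b (ρ i (ρ i a)) i = b a i := by rw [h.reflect_self, h.reflect_self, neg_neg]
  rcases eq_or_ne i j with rfl | hij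
  · exact ⟨by rw [h.cartan_diag, h.cartan_diag], hMi⟩
  set d : ℝ := C (ρ i a) i j - C a i j
  have hMj : b (ρ i (ρ i a)) j = b a j + d • b a i := by
    rw [h.reflect_eq_add_smul, h.reflect_eq_add_smul, h.reflect_self]
    simp only [d]
    module
  have hd₁ : 0 ≤ d := (h.signCoherent a).nonneg_of_add_smul_mem hij (hMj ▸ h.basis_mem _ j)
  have hd₂ : 0 ≤ -d := by
    refine (h.signCoherent (ρ i (ρ i a))).nonneg_of_add_smul_mem hij ?_
    rw [hMj, hMi, neg_smul, add_neg_cancel_right]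
    exact h.basis_mem a j
  have hd : d = 0 := by linarith
  refine ⟨?_, by rw [hMj, hd, zero_smul, add_zero]⟩
  exact_mod_cast sub_eq_zero.1 hd

lemma repr_reflect_apply (h : IsReflectionBasisFamily R b ρ C) (a : A) {k i : ι} (hik : i ≠ k)
    (β : W) : (b (ρ k a)).repr β i = (b a).repr β i := by
  have hcoord : (b (ρ k a)).coord i = (b a).coord i := by
    refine (b a).ext fun j => ?_
    have hj : b a j = b (ρ k a) j - (C a k j : ℝ) • b (ρ k a) k := by
      rw [h.reflect_eq_add_smul, h.reflect_self]
      module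
    conv_lhs => rw [hj]
    simp [Finsupp.single_apply, hik.symm]
  exact LinearMap.congr_fun hcoord β

/-- A coordinate of `β` other than the `k`-th one is positive, and `ρ k` does not change it. -/
lemma repr_nonneg_reflect (h : IsReflectionBasisFamily R b ρ C) (a : A) (k : ι) {β : W}
    (hβ : β ∈ R) (hnn : ∀ i, 0 ≤ (b a).repr β i) (hne : ∃ i ≠ k, (b a).repr β i ≠ 0) (i : ι) :
    0 ≤ (b (ρ k a)).repr β i := by
  obtain ⟨j, hjk, hj⟩ := hne
  refine (h.signCoherent (ρ k a)).repr_nonneg hβ (j := j) ?_ i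
  rw [h.repr_reflect_apply a hjk]
  exact (hnn j).lt_of_ne' hj

end IsReflectionBasisFamily

end BasisFamily

section SimplicialCone

variable {V : Type*} [NormedAddCommGroup V] [NormedSpace ℝ V] [FiniteDimensional ℝ V]
  {ι : Type*} [Fintype ι] [DecidableEq ι] (b : Basis ι ℝ (Dual ℝ V))

def predualBasis : Basis ι ℝ V := b.dualBasis.map (evalEquiv ℝ V).symm

@[simp]
lemma apply_predualBasis (i j : ι) : b i (predualBasis b j) = if i = j then 1 else 0 := by
  simp [predualBasis, apply_evalEquiv_symm_apply, Finsupp.single_apply]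

@[simp]
lemma predualBasis_repr (v : V) (i : ι) : (predualBasis b).repr v i = b i v := by
  simp [predualBasis]

lemma closure_setOf_forall_pos :
    closure {v : V | ∀ i, 0 < b i v} = {v | ∀ i, 0 ≤ b i v} := by
  apply subset_antisymm
  · refine closure_minimal (fun v hv i => (hv i).le) ?_
    simp only [Set.ofPred_forall]
    exact isClosed_iInter fun i =>
      isClosed_le continuous_const (b i).continuous_of_finiteDimensional
  · intro v hv
    set u := ∑ j, predualBasis b j
    have hu : ∀ i, b i u = 1 := by simp [u]
    have hlim : Filter.Tendsto (fun t : ℝ => v + t • u) (nhdsWithin 0 (Set.Ioi 0)) (nhds v) := by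
      have : Continuous (fun t : ℝ => v + t • u) := by fun_prop
      simpa using (this.tendsto 0).mono_left nhdsWithin_le_nhds
    refine mem_closure_of_tendsto hlim (eventually_nhdsWithin_of_forall fun t ht i => ?_)
    simpa [hu] using add_pos_of_nonneg_of_pos (hv i) ht

lemma predualBasis_mem_closure (j : ι) : predualBasis b j ∈ closure {v : V | ∀ i, 0 < b i v} := by
  rw [closure_setOf_forall_pos]
  intro i
  rw [apply_predualBasis]
  split_ifs <;> norm_num

lemma isWall_dualKer_basis (i : ι) : IsWall {v : V | ∀ i, 0 < b i v} (dualKer (b i)) := by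
  refine ⟨⟨b i, b.ne_zero i, rfl⟩,
    Set.eq_empty_of_forall_notMem fun v ⟨hv, hvK⟩ => (hvK i).ne' hv, ?_⟩
  apply subset_antisymm
  · exact Submodule.span_le (p := LinearMap.ker (b i)).2 Set.inter_subset_left
  · intro v hv
    rw [← (predualBasis b).sum_repr v]
    refine Submodule.sum_mem _ fun j _ => ?_
    by_cases hij : i = j
    · subst hij
      simp [show b i v = 0 from hv]
    · refine Submodule.smul_mem _ _ (Submodule.subset_span ⟨?_, predualBasis_mem_closure b j⟩)
      simp [dualKer, hij]

lemma exists_pos_smul_eq_of_isWall {α : Dual ℝ V} (hpos : ∀ v, (∀ i, 0 < b i v) → 0 < α v)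
    (hwall : IsWall {v : V | ∀ i, 0 < b i v} (dualKer α)) : ∃ i, ∃ c : ℝ, 0 < c ∧ α = c • b i := by
  set e := predualBasis b
  have hc : ∀ i, 0 ≤ α (e i) := fun i =>
    closure_minimal (fun v hv => (hpos v hv).le) (isClosed_le continuous_const
      α.continuous_of_finiteDimensional) (predualBasis_mem_closure b i)
  have hα : α = ∑ i, α (e i) • b i := e.ext fun j => by simp [e]
  obtain ⟨i₀, hi₀⟩ : ∃ i₀, α (e i₀) ≠ 0 := by
    by_contra! h
    have := hpos (∑ j, e j) fun i => by simp [e]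
    simp [h] at this
  have hker : dualKer α ⊆ dualKer (b i₀) := by
    rw [← hwall.2.2]
    refine Submodule.span_le (p := LinearMap.ker (b i₀)).2 fun v ⟨hv, hvcl⟩ => ?_
    rw [closure_setOf_forall_pos] at hvcl
    have hsum : ∑ i, α (e i) * b i v = 0 := by
      have hv : α v = 0 := hv
      rw [hα] at hv
      simpa only [LinearMap.coe_sum, Finset.sum_apply, LinearMap.smul_apply, smul_eq_mul] using hv
    have := (Finset.sum_eq_zero_iff_of_nonneg fun i _ => mul_nonneg (hc i) (hvcl i)).1 hsum i₀
      (Finset.mem_univ _)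
    exact (mul_eq_zero.1 this).resolve_left hi₀
  have hsingle : ∀ i, i ≠ i₀ → α (e i) = 0 := by
    intro i hi
    have hw : α (e i) • e i₀ - α (e i₀) • e i ∈ dualKer α := by
      change α _ = 0
      simp only [map_sub, map_smul, smul_eq_mul]
      ring
    have h0 : b i₀ (α (e i) • e i₀ - α (e i₀) • e i) = 0 := hker hw
    simpa [e, Ne.symm hi] using h0
  refine ⟨i₀, α (e i₀), (hc i₀).lt_of_ne' hi₀, ?_⟩
  nth_rewrite 1 [hα]
  rw [Finset.sum_eq_single i₀ (fun i _ hi => by rw [hsingle i hi, zero_smul]) (by simp)]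

end SimplicialCone

section Chambers

variable {V : Type*} [TopologicalSpace V] {𝒜 : Set (Set V)} {T : Set V}

lemma chamber_subset {K : Set V} (hK : K ∈ chambersOf 𝒜 T) : K ⊆ T \ ⋃₀ 𝒜 := by
  obtain ⟨x, -, rfl⟩ := hK
  exact connectedComponentIn_subset _ _

lemma chamber_nonempty {K : Set V} (hK : K ∈ chambersOf 𝒜 T) : K.Nonempty := by
  obtain ⟨x, hx, rfl⟩ := hK
  exact ⟨x, mem_connectedComponentIn hx⟩

lemma chamber_eq_of_mem {K K' : Set V} (hK : K ∈ chambersOf 𝒜 T) (hK' : K' ∈ chambersOf 𝒜 T)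
    {y : V} (hy : y ∈ K) (hy' : y ∈ K') : K = K' := by
  obtain ⟨x, -, rfl⟩ := hK
  obtain ⟨x', -, rfl⟩ := hK'
  rw [connectedComponentIn_eq hy, connectedComponentIn_eq hy']

variable [AddCommGroup V] [Module ℝ V]

lemma IsHyperplaneArrangement.finite_meeting_of_isCompact (hA : IsHyperplaneArrangement 𝒜 T)
    {S : Set V} (hS : IsCompact S) (hST : S ⊆ T) : {H ∈ 𝒜 | (H ∩ S).Nonempty}.Finite := by
  choose! U hUo hxU _ hfin using hA.locallyFinite
  obtain ⟨t, htS, hcover⟩ := hS.elim_nhds_subcover U fun x hx =>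
    (hUo x (hST hx)).mem_nhds (hxU x (hST hx))
  refine (t.finite_toSet.biUnion fun x hx => hfin x (hST (htS x hx))).subset ?_
  rintro H ⟨hH, v, hvH, hvS⟩
  obtain ⟨x, hx, hvU⟩ := Set.mem_iUnion₂.1 (hcover hvS)
  exact Set.mem_biUnion hx ⟨hH, v, hvH, hvU⟩

lemma IsLinearHyperplane.dense_compl [ContinuousAdd V] [ContinuousSMul ℝ V] {H : Set V}
    (hH : IsLinearHyperplane H) : Dense Hᶜ := by
  obtain ⟨α, hα, rfl⟩ := hH
  rw [← interior_eq_empty_iff_dense_compl, Set.eq_empty_iff_forall_notMem]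
  intro v hv
  have htop := (LinearMap.ker α).eq_top_of_nonempty_interior' ⟨v, hv⟩
  exact hα (LinearMap.ker_eq_top.1 htop)

end Chambers

section Arrangement

variable {V : Type*} [NormedAddCommGroup V] [NormedSpace ℝ V] [FiniteDimensional ℝ V]
  {𝒜 : Set (Set V)} {T : Set V}

lemma IsLinearHyperplane.isClosed {H : Set V} (hH : IsLinearHyperplane H) : IsClosed H := by
  obtain ⟨α, -, rfl⟩ := hH
  exact isClosed_eq α.continuous_of_finiteDimensional continuous_const

lemma IsHyperplaneArrangement.exists_chamber (hA : IsHyperplaneArrangement 𝒜 T) :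
    ∃ K, K ∈ chambersOf 𝒜 T := by
  obtain ⟨x, hx⟩ := hA.T_nonempty
  obtain ⟨U, hUo, hxU, hUT, hfin⟩ := hA.locallyFinite x hx
  have hdense : Dense (⋂ H ∈ {H ∈ 𝒜 | (H ∩ U).Nonempty}, Hᶜ) :=
    dense_biInter_of_isOpen (fun H hH => ((hA.hyperplanes H hH.1).isClosed).isOpen_compl)
      hfin.countable fun H hH => (hA.hyperplanes H hH.1).dense_compl
  obtain ⟨v, hv, hvU⟩ := hdense.exists_mem_open hUo ⟨x, hxU⟩
  refine ⟨_, v, ⟨hUT hvU, fun ⟨H, hH, hvH⟩ => ?_⟩, rfl⟩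
  exact Set.mem_iInter₂.1 hv H ⟨hH, v, hvH, hvU⟩ hvH

lemma IsHyperplaneArrangement.finite_sepSet (hA : IsHyperplaneArrangement 𝒜 T)
    {K K' : Set V} {x y : V} (hx : x ∈ K) (hy : y ∈ K') (hxT : x ∈ T) (hyT : y ∈ T) :
    (sepSet 𝒜 K K').Finite := by
  have hseg : IsCompact (segment ℝ x y) := by
    rw [segment_eq_image]
    exact isCompact_Icc.image (by fun_prop)
  refine (hA.finite_meeting_of_isCompact hseg
    (hA.T_convex.segment_subset hxT hyT)).subset ?_
  rintro H ⟨hH, α, rfl, hαK, hαK'⟩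
  obtain ⟨z, hz, hαz⟩ := (convex_segment x y).isPreconnected.intermediate_value
    (right_mem_segment ℝ x y) (left_mem_segment ℝ x y)
    α.continuous_of_finiteDimensional.continuousOn ⟨(hαK' y hy).le, (hαK x hx).le⟩
  exact ⟨hH, z, hαz, hz⟩

end Arrangement

section RootBasis

variable {V : Type*} [NormedAddCommGroup V] [NormedSpace ℝ V] [FiniteDimensional ℝ V]
  {𝒜 : Set (Set V)} {T : Set V} {R : Set (Dual ℝ V)}
  {ι : Type*} [Fintype ι]

lemma pos_smul_mem_rootBasisOf [DecidableEq ι] (b : Basis ι ℝ (Dual ℝ V)) {i : ι} {c : ℝ}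
    (hc : 0 < c) (hmem : c • b i ∈ R) : c • b i ∈ rootBasisOf R {v : V | ∀ i, 0 < b i v} := by
  refine ⟨hmem, ?_, fun v hv => mul_pos hc (hv i)⟩
  rw [dualKer_smul_s3 hc.ne']
  exact isWall_dualKer_basis b i

lemma exists_pos_smul_mem_rootBasisOf [DecidableEq ι] (hTits : IsTitsArrangement 𝒜 T)
    (hR : IsAssociatedRootSystem 𝒜 R) (b : Basis ι ℝ (Dual ℝ V))
    (hK : {v : V | ∀ i, 0 < b i v} ∈ chambersOf 𝒜 T) (i : ι) :
    ∃ c : ℝ, 0 < c ∧ c • b i ∈ rootBasisOf R {v : V | ∀ i, 0 < b i v} := by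
  have hH : dualKer (b i) ∈ 𝒜 := hTits.thin _ hK _ (isWall_dualKer_basis b i)
  rw [hR.2.2] at hH
  obtain ⟨γ, hγ, hker⟩ := hH
  obtain ⟨t, rfl⟩ := exists_smul_eq_of_dualKer_subset hker.le
  rcases lt_or_gt_of_ne (fun ht : t = 0 => hR.1 (by simpa [ht] using hγ)) with ht | ht
  · refine ⟨-t, neg_pos.2 ht, pos_smul_mem_rootBasisOf b (neg_pos.2 ht) ?_⟩
    convert hR.2.1 _ hγ using 1
    module
  · exact ⟨t, ht, pos_smul_mem_rootBasisOf b ht hγ⟩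

/-- The root basis consists of positive multiples of the functionals cutting out `K` as a
simplicial cone, one for each wall. -/
lemma IsTitsArrangement.exists_basis_of_rootBasisOf (hTits : IsTitsArrangement 𝒜 T)
    (hR : IsAssociatedRootSystem 𝒜 R) {K : Set V} (hK : K ∈ chambersOf 𝒜 T)
    (a : ι → Dual ℝ V) (hcard : Fintype.card ι = finrank ℝ V)
    (hrange : Set.range a = rootBasisOf R K) :
    ∃ B : Basis ι ℝ (Dual ℝ V), ⇑B = a ∧ K = {v | ∀ k, 0 < B k v} := by
  obtain ⟨b, rfl⟩ := hTits.simplicial K hK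
  have ha : ∀ k, ∃ i, ∃ c : ℝ, 0 < c ∧ a k = c • b i := fun k => by
    obtain ⟨-, hwall, hpos⟩ := hrange ▸ Set.mem_range_self k
    exact exists_pos_smul_eq_of_isWall b (fun v hv => hpos v hv) hwall
  choose m c hc hmc using ha
  have hm : Function.Surjective m := fun i => by
    obtain ⟨c', hc', hmem⟩ := exists_pos_smul_mem_rootBasisOf hTits hR b hK i
    obtain ⟨k, hk⟩ := hrange.symm ▸ hmem
    refine ⟨k, by_contra fun hki => hc'.ne' ?_⟩
    simpa [hmc, hki] using congrArg (· (predualBasis b i)) hk.symm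
  have hmbij : Function.Bijective m :=
    (Fintype.bijective_iff_surjective_and_card m).2 ⟨hm, by simp [hcard]⟩
  refine ⟨(b.reindex (Equiv.ofBijective m hmbij).symm).unitsSMul
    fun k => Units.mk0 (c k) (hc k).ne', funext fun k => by
    simp [Basis.unitsSMul_apply, hmc], ?_⟩
  ext v
  simp only [Basis.unitsSMul_apply, Basis.reindex_apply, Equiv.symm_symm, Equiv.ofBijective_apply,
    Units.smul_mk0, LinearMap.smul_apply, smul_eq_mul, Set.mem_ofPred_eq]
  refine ⟨fun hv k => mul_pos (hc k) (hv (m k)), fun hv i => ?_⟩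
  obtain ⟨k, rfl⟩ := hm i
  exact pos_of_mul_pos_right (hv k) (hc k).le

end RootBasis

lemma WeylHom.trans {I A : Type*} [Fintype I] [DecidableEq I] {ρ : I → A → A}
    {C : A → Matrix I I ℤ} {a b c : A} {f g : (I → ℤ) → (I → ℤ)}
    (hf : WeylHom ρ C a b f) (hg : WeylHom ρ C b c g) : WeylHom ρ C a c (g ∘ f) := by
  induction hg with
  | id => exact hf
  | comp i _ ih => exact ih.comp i

abbrev Chamber {V : Type*} [AddCommGroup V] [Module ℝ V] [TopologicalSpace V]
    (𝒜 : Set (Set V)) (T : Set V) : Type _ :=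
  {K : Set V // K ∈ chambersOf 𝒜 T}

section ChamberGraph

variable {V ι : Type*} [AddCommGroup V] [Module ℝ V] [TopologicalSpace V]
  {𝒜 : Set (Set V)} {T : Set V} {R : Set (Dual ℝ V)}
  {b : Chamber 𝒜 T → Basis ι ℝ (Dual ℝ V)} {ρ : ι → Chamber 𝒜 T → Chamber 𝒜 T}
  {C : Chamber 𝒜 T → Matrix ι ι ℤ}

lemma IsReflectionBasisFamily.involutive [DecidableEq ι] (hfam : IsReflectionBasisFamily R b ρ C)
    (hcone : ∀ K x, x ∈ K.1 ↔ ∀ i, 0 < b K i x) (i : ι) : Function.Involutive (ρ i) :=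
  fun K => Subtype.ext <| Set.ext fun x => by simp only [hcone, (hfam.reflect_reflect K i _).2]

variable [Fintype ι]

lemma IsReflectionBasisFamily.exists_root_pos (hfam : IsReflectionBasisFamily R b ρ C)
    (hcone : ∀ K x, x ∈ K.1 ↔ ∀ i, 0 < b K i x) (hR : IsAssociatedRootSystem 𝒜 R)
    (K : Chamber 𝒜 T) {H : Set V} (hH : H ∈ 𝒜) :
    ∃ β ∈ R, H = dualKer β ∧ ∀ x ∈ K.1, 0 < β x := by
  rw [hR.2.2] at hH
  obtain ⟨γ, hγ, rfl⟩ := hH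
  rcases (hfam.signCoherent K).pos_or_neg hγ (fun h => hR.1 (h ▸ hγ)) with h | h
  · exact ⟨γ, hγ, rfl, fun x hx => h x ((hcone K x).1 hx)⟩
  · exact ⟨-γ, hR.2.1 γ hγ, (dualKer_neg γ).symm, fun x hx => neg_pos.2 (h x ((hcone K x).1 hx))⟩


lemma IsReflectionBasisFamily.eq_of_forall_notMem_sepSet (hfam : IsReflectionBasisFamily R b ρ C)
    (hcone : ∀ K x, x ∈ K.1 ↔ ∀ i, 0 < b K i x) (hR : IsAssociatedRootSystem 𝒜 R)
    {K K' : Chamber 𝒜 T} (h : ∀ k, dualKer (b K k) ∉ sepSet 𝒜 K.1 K'.1) : K = K' := by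
  obtain ⟨y, hy⟩ := chamber_nonempty K'.2
  have hyK : ∀ k, 0 < b K k y := fun k => by
    rcases (hfam.signCoherent K').pos_or_neg (hfam.basis_mem K k) ((b K).ne_zero k) with hpos | hneg
    · exact hpos y ((hcone K' y).1 hy)
    · refine (h k ⟨hR.2.2 ▸ ⟨b K k, hfam.basis_mem K k, rfl⟩, b K k, rfl, ?_, ?_⟩).elim
      · exact fun x hx => (hcone K x).1 hx k
      · exact fun x hx => hneg x ((hcone K' x).1 hx)
  exact Subtype.ext (chamber_eq_of_mem K.2 K'.2 ((hcone K y).2 hyK) hy)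

variable [DecidableEq ι]

lemma IsReflectionBasisFamily.pos_reflect_of_dualKer_ne (hfam : IsReflectionBasisFamily R b ρ C)
    (hcone : ∀ K x, x ∈ K.1 ↔ ∀ i, 0 < b K i x) (hR0 : (0 : Dual ℝ V) ∉ R) {K : Chamber 𝒜 T}
    {k : ι} {β : Dual ℝ V} (hβ : β ∈ R) (hpos : ∀ x ∈ K.1, 0 < β x)
    (hker : dualKer β ≠ dualKer (b K k)) (x : V) (hx : x ∈ (ρ k K).1) : 0 < β x := by
  have hβ0 : β ≠ 0 := fun h => hR0 (h ▸ hβ)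
  obtain ⟨v, hv⟩ := chamber_nonempty K.2
  have hnn := (hfam.signCoherent K).repr_nonneg_of_pos hβ ((hcone K v).1 hv) (hpos v hv)
  have hne : ∃ i ≠ k, (b K).repr β i ≠ 0 := by
    by_contra! h
    have hβk : β = (b K).repr β k • b K k := by
      conv_lhs => rw [← (b K).sum_repr β]
      exact Finset.sum_eq_single k (fun i _ hi => by simp [h i hi]) (by simp)
    refine hker (hβk ▸ dualKer_smul_s3 fun h0 => hβ0 ?_)
    rw [hβk, h0, zero_smul]
  exact pos_of_repr_nonneg _ hβ0 (hfam.repr_nonneg_reflect K k hβ hnn hne) ((hcone _ x).1 hx)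

lemma IsReflectionBasisFamily.sepSet_reflect (hfam : IsReflectionBasisFamily R b ρ C)
    (hcone : ∀ K x, x ∈ K.1 ↔ ∀ i, 0 < b K i x) (hR : IsAssociatedRootSystem 𝒜 R)
    {K K' : Chamber 𝒜 T} {k : ι} (hk : dualKer (b K k) ∈ sepSet 𝒜 K.1 K'.1) :
    sepSet 𝒜 (ρ k K).1 K'.1 = sepSet 𝒜 K.1 K'.1 \ {dualKer (b K k)} := by
  have hne : ∀ P : Chamber 𝒜 T, P.1.Nonempty := fun P => chamber_nonempty P.2
  ext H
  simp only [sepSet, Set.mem_sdiff, Set.mem_ofPred_eq, Set.mem_singleton_iff, and_assoc]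
  refine and_congr_right fun hH => ?_
  obtain ⟨β, hβ, rfl, hβK⟩ := hfam.exists_root_pos hcone hR K hH
  by_cases hker : dualKer β = dualKer (b K k)
  · have hβK' : ∀ x ∈ K'.1, β x < 0 := (separatesH_dualKer_iff (hne K) hβK).1 (hker ▸ hk.2)
    have hβL : ∀ x ∈ (ρ k K).1, β x < 0 := by
      refine (separatesH_dualKer_iff (hne K) hβK).1 (hker ▸ ⟨b K k, rfl, ?_, ?_⟩)
      · exact fun x hx => (hcone K x).1 hx k
      · intro x hx
        simpa [hfam.reflect_self] using (hcone (ρ k K) x).1 hx k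
    rw [iff_false_intro (not_and_not_right.2 fun _ => hker), ← dualKer_neg,
      separatesH_dualKer_iff (hne _) fun x hx => neg_pos.2 (hβL x hx), iff_false]
    obtain ⟨y, hy⟩ := hne K'
    exact fun h => (hβK' y hy).not_gt (neg_neg_iff_pos.1 (h y hy))
  · rw [separatesH_dualKer_iff (hne _) (hfam.pos_reflect_of_dualKer_ne hcone hR.1 hβ hβK hker),
      separatesH_dualKer_iff (hne K) hβK, and_iff_left hker]

end ChamberGraph

section Connectedness

variable {V ι : Type*} [NormedAddCommGroup V] [NormedSpace ℝ V] [FiniteDimensional ℝ V]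
  [Fintype ι] [DecidableEq ι] {𝒜 : Set (Set V)} {T : Set V} {R : Set (Dual ℝ V)}
  {b : Chamber 𝒜 T → Basis ι ℝ (Dual ℝ V)} {ρ : ι → Chamber 𝒜 T → Chamber 𝒜 T}
  {C : Chamber 𝒜 T → Matrix ι ι ℤ}

/-- Induction on the number of hyperplanes separating `K` from `K'`: some wall of `K` separates
them unless `K = K'`, and crossing it decreases that number by one. -/
lemma IsReflectionBasisFamily.cgConnected (hA : IsHyperplaneArrangement 𝒜 T)
    (hfam : IsReflectionBasisFamily R b ρ C) (hcone : ∀ K x, x ∈ K.1 ↔ ∀ i, 0 < b K i x)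
    (hR : IsAssociatedRootSystem 𝒜 R) : CGConnected ρ C := by
  intro K K'
  have hfin : ∀ P : Chamber 𝒜 T, (sepSet 𝒜 P.1 K'.1).Finite := fun P => by
    obtain ⟨x, hx⟩ := chamber_nonempty P.2
    obtain ⟨y, hy⟩ := chamber_nonempty K'.2
    exact hA.finite_sepSet hx hy (chamber_subset P.2 hx).1 (chamber_subset K'.2 hy).1
  induction hn : (sepSet 𝒜 K.1 K'.1).ncard generalizing K with
  | zero =>
    obtain rfl := hfam.eq_of_forall_notMem_sepSet hcone hR fun k hk =>
      ((Set.ncard_pos (hfin K)).2 ⟨_, hk⟩).ne' hn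
    exact ⟨_, .id K⟩
  | succ n ih =>
    by_cases h : ∃ k, dualKer (b K k) ∈ sepSet 𝒜 K.1 K'.1
    · obtain ⟨k, hk⟩ := h
      have hcard : (sepSet 𝒜 (ρ k K).1 K'.1).ncard = n := by
        rw [hfam.sepSet_reflect hcone hR hk, Set.ncard_sdiff_singleton_of_mem hk, hn,
          Nat.add_sub_cancel]
      obtain ⟨f, hf⟩ := ih (ρ k K) hcard
      exact ⟨_, ((WeylHom.id K).comp k).trans hf⟩
    · obtain rfl := hfam.eq_of_forall_notMem_sepSet hcone hR (not_exists.1 h)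
      exact ⟨_, .id K⟩

end Connectedness

theorem statement_3_general {r : ℕ} (𝒜 : Set (Set (Vr r))) (T : Set (Vr r))
    (R : Set (Module.Dual ℝ (Vr r)))
    (hTits : IsTitsArrangement 𝒜 T) (hR : IsAssociatedRootSystem 𝒜 R)
    (hcrys : IsCrystallographic 𝒜 T R)
    (ind : {K : Set (Vr r) // K ∈ chambersOf 𝒜 T} → Fin r → Module.Dual ℝ (Vr r))
    (hind : ∀ K, Function.Injective (ind K) ∧ Set.range (ind K) = rootBasisOf R K.1)
    (ρ : Fin r → {K : Set (Vr r) // K ∈ chambersOf 𝒜 T} →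
      {K : Set (Vr r) // K ∈ chambersOf 𝒜 T})
    (hcompat : ∀ i K, ind (ρ i K) i = -(ind K i) ∧
      ∀ j, ind (ρ i K) j ∈ Submodule.span ℝ {ind K j, ind K i})
    (C : {K : Set (Vr r) // K ∈ chambersOf 𝒜 T} → Matrix (Fin r) (Fin r) ℤ)
    (hC : ∀ K i j, ind (ρ i K) j = ind K j - C K i j • ind K i) :
    IsCartanGraph ρ C ∧ CGConnected ρ C := by
  choose B hBind hKB using fun K : Chamber 𝒜 T =>
    hTits.exists_basis_of_rootBasisOf hR K.2 (ind K) (by simp) (hind K).2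
  have hfam : IsReflectionBasisFamily R B ρ C :=
    { neg_mem := hR.2.1
      basis_mem := fun K i => by
        rw [hBind]
        exact ((hind K).2 ▸ Set.mem_range_self i : ind K i ∈ rootBasisOf R K.1).1
      signCoherent := fun K => hcrys.isSignCoherent K.2 (by rw [hBind]; exact (hind K).2)
      reflect_self := fun K i => by simpa only [hBind] using (hcompat i K).1
      reflect := fun K i j => by simpa only [hBind] using hC K i j }
  have hcone : ∀ K x, x ∈ K.1 ↔ ∀ i, 0 < B K i x := fun K => Set.ext_iff.1 (hKB K)
  obtain ⟨K₀, hK₀⟩ := hTits.exists_chamber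
  exact ⟨⟨⟨⟨K₀, hK₀⟩⟩, hfam.isGCM, hfam.involutive hcone,
      fun K i j => (hfam.reflect_reflect K i j).1.symm⟩,
    hfam.cgConnected hTits.toIsHyperplaneArrangement hcone hR⟩

/-- given a crystallographic Tits arrangement `(𝒜,T)` w.r.t. `R` with
compatibly indexed root bases `ind K` of all chambers, the maps `ρ_i` sending a chamber to
its `i`-adjacent chamber and the Cartan matrices `C^K` at the chambers form a connected
Cartan graph `𝒞(I, 𝒦, (ρ_i), (C^K))`. -/
theorem statement_3 {r : ℕ} (𝒜 : Set (Set (Vr r))) (T : Set (Vr r))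
    (R : Set (Module.Dual ℝ (Vr r)))
    (hTits : IsTitsArrangement 𝒜 T) (hR : IsAssociatedRootSystem 𝒜 R)
    (hcrys : IsCrystallographic 𝒜 T R)
    (ind : {K : Set (Vr r) // K ∈ chambersOf 𝒜 T} → Fin r → Module.Dual ℝ (Vr r))
    (hind : ∀ K, Function.Injective (ind K) ∧ Set.range (ind K) = rootBasisOf R K.1)
    (ρ : Fin r → {K : Set (Vr r) // K ∈ chambersOf 𝒜 T} →
      {K : Set (Vr r) // K ∈ chambersOf 𝒜 T})
    (hρ : ∀ i K, ρ i K ≠ K ∧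
      (Submodule.span ℝ (closure K.1 ∩ closure (ρ i K).1) : Set (Vr r)) =
        dualKer (ind K i))
    (hcompat : ∀ i K, ind (ρ i K) i = -(ind K i) ∧
      ∀ j, ind (ρ i K) j ∈ Submodule.span ℝ {ind K j, ind K i})
    (C : {K : Set (Vr r) // K ∈ chambersOf 𝒜 T} → Matrix (Fin r) (Fin r) ℤ)
    (hC : ∀ K i j, ind (ρ i K) j = ind K j - C K i j • ind K i) :
    IsCartanGraph ρ C ∧ CGConnected ρ C :=
  statement_3_general 𝒜 T R hTits hR hcrys ind hind ρ hcompat C hC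
end
end
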